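/- For two bidders with both ROS and budget constraints, in rFPA(alpha) with alpha = 1.4, every undominated bid profile satisfies 1.8 · LW ≥ OPT; i.e., rFPA(1.4) obtains at least a 1/1.8 fraction of the liquid welfare of the optimal randomized allocation. -/

import Mathlib

open Finset
open scoped Classical

noncomputable section

/-- An allocation: each entry in `[0,1]`, and each query allocated total probability at most 1. -/
def IsAlloc {n q : ℕ} (π : Fin n → Fin q → ℝ) : Prop :=
  (∀ i j, 0 ≤ π i j) ∧ (∀ i j, π i j ≤ 1) ∧ ∀ j, ∑ i, π i j ≤ 1

/-- An integral (deterministic) allocation. -/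
def IsIntegralAlloc {n q : ℕ} (π : Fin n → Fin q → ℝ) : Prop :=
  IsAlloc π ∧ ∀ i j, π i j = 0 ∨ π i j = 1

/-- Liquid welfare of an allocation. -/
def allocLW {n q : ℕ} (B : Fin n → ℝ) (v π : Fin n → Fin q → ℝ) : ℝ :=
  ∑ i, min (B i) (∑ j, π i j * v i j)

/-- Winning probability of a bidder bidding `bi` against an opponent bidding `bo`
in the randomized first-price auction with parameter `α`. -/
def rfpaProb (α bi bo : ℝ) : ℝ :=
  if bi = 0 ∧ bo = 0 then 0
  else if α * bo ≤ bi then 1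
  else if α * bi ≤ bo then 0
  else (1 / 2) * (1 + Real.log (bi / bo) / Real.log α)

/-- Probability that bidder `i` wins query `j` in rFPA(α) with two bidders. -/
def rfpaPi {q : ℕ} (α : ℝ) (b : Fin 2 → Fin q → ℝ) (i : Fin 2) (j : Fin q) : ℝ :=
  rfpaProb α (b i j) (b (i + 1) j)

/-- Expected value of bidder `i` in rFPA(α). -/
def rfpaV {q : ℕ} (α : ℝ) (v b : Fin 2 → Fin q → ℝ) (i : Fin 2) : ℝ :=
  ∑ j, rfpaPi α b i j * v i j

/-- Expected spend of bidder `i` in rFPA(α). -/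
def rfpaSpendI {q : ℕ} (α : ℝ) (b : Fin 2 → Fin q → ℝ) (i : Fin 2) : ℝ :=
  ∑ j, rfpaPi α b i j * b i j

/-- Liquid welfare of a bid profile in rFPA(α). -/
def rfpaLW {q : ℕ} (α : ℝ) (B : Fin 2 → ℝ) (v b : Fin 2 → Fin q → ℝ) : ℝ :=
  ∑ i, min (B i) (rfpaV α v b i)

/-- Undominated (equilibrium) bid profile for rFPA(α) with ROS and budget constraints. -/
def IsRfpaEq {q : ℕ} (α : ℝ) (B : Fin 2 → ℝ) (v b : Fin 2 → Fin q → ℝ) : Prop :=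
  (∀ i j, 0 ≤ b i j) ∧
  (∀ i, rfpaSpendI α b i ≤ min (B i) (rfpaV α v b i)) ∧
  (∀ i (b' : Fin q → ℝ), (∀ j, 0 ≤ b' j) →
    rfpaV α v (Function.update b i b') i ≤ rfpaV α v b i ∨
    min (B i) (rfpaV α v (Function.update b i b') i)
      < rfpaSpendI α (Function.update b i b') i)

/-!
Write `ℓᵢ = min(Bᵢ, Vᵢ)`, so `LW = ℓ₀ + ℓ₁`, `Oᵢ = ∑ⱼ πᵢⱼ vᵢⱼ` for an optimal allocation `π`, and
`Tᵢ = ∑ⱼ πᵢⱼ b₋ᵢ,ⱼ`. Against an opposing bid `c > 0` the bid `α^(2w-1) c` wins with probability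
exactly `w`, so undominatedness says that buying the fraction `wⱼ` of each query `j` this way does
not pay: either `∑ⱼ wⱼ vᵢⱼ ≤ Vᵢ`, or `min(Bᵢ, ∑ⱼ wⱼ vᵢⱼ) ≤ ∑ⱼ wⱼ α^(2wⱼ-1) b₋ᵢ,ⱼ`.
For `α = 1.4` every bid is at most `1.07` times the expected payment on its query, and total
payments are at most `LW`, so `T₀ + T₁ ≤ 1.07 LW`. If `Oᵢ > Vᵢ` for both bidders, `w = πᵢ` gives
`min(Bᵢ, Oᵢ) ≤ 1.4 Tᵢ`, hence `OPT ≤ 1.4 · 1.07 LW`. If only bidder `i` has `Oᵢ > Vᵢ` (and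
`Vᵢ < Bᵢ`), `w = μ πᵢ` with `Vᵢ < μ Oᵢ ≤ Bᵢ` gives `Oᵢ ≤ 1.4^(2μ-1) Tᵢ`; letting `μ ↓ σ = Vᵢ / Oᵢ`
and using `1.07 · 1.4^(2σ-1) (1 - σ) ≤ 0.8` yields `min(Bᵢ, Oᵢ) ≤ ℓᵢ + 0.8 LW`.
-/

open Filter Topology

section Prob

variable {α x y : ℝ}

lemma rfpaProb_eq_one (hx : 0 < x) (h : α * y ≤ x) : rfpaProb α x y = 1 := by
  rw [rfpaProb, if_neg (fun h0 => hx.ne' h0.1), if_pos h]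

lemma rfpaProb_eq_zero (hα : 1 < α) (hx : 0 ≤ x) (hy : 0 < y) (h : α * x ≤ y) :
    rfpaProb α x y = 0 := by
  have : ¬ α * y ≤ x := by nlinarith
  rw [rfpaProb, if_neg (fun h0 => hy.ne' h0.2), if_neg this, if_pos h]

lemma logb_div_mem_Ioo (hα : 1 < α) (hx : 0 < x) (hy : 0 < y) (hxy : x < α * y)
    (hyx : y < α * x) : Real.logb α (x / y) ∈ Set.Ioo (-1) 1 := by
  constructor
  · rw [Real.lt_logb_iff_rpow_lt hα (by positivity), Real.rpow_neg_one, lt_div_iff₀ hy]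
    field_simp
    linarith
  · rw [Real.logb_lt_iff_lt_rpow hα (by positivity), Real.rpow_one, div_lt_iff₀ hy]
    linarith

lemma rfpaProb_of_lt_mul (hx : 0 < x) (hxy : x < α * y) (hyx : y < α * x) :
    rfpaProb α x y = (1 + Real.logb α (x / y)) / 2 := by
  rw [rfpaProb, if_neg (fun h0 => hx.ne' h0.1), if_neg (not_le.2 hyx), if_neg (not_le.2 hxy),
    Real.logb]
  ring

lemma rfpa_bid_cases (hα : 1 < α) (hx : 0 ≤ x) (hy : 0 ≤ y) :
    (x = 0 ∧ y = 0) ∨ (0 < x ∧ α * y ≤ x) ∨ (0 < y ∧ α * x ≤ y) ∨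
      (0 < x ∧ 0 < y ∧ x < α * y ∧ y < α * x) := by
  rcases hx.eq_or_lt with rfl | hx
  · rcases hy.eq_or_lt with rfl | hy
    · exact Or.inl ⟨rfl, rfl⟩
    · exact Or.inr (Or.inr (Or.inl ⟨hy, by linarith⟩))
  by_cases hyx : α * y ≤ x
  · exact Or.inr (Or.inl ⟨hx, hyx⟩)
  by_cases hxy : α * x ≤ y
  · exact Or.inr (Or.inr (Or.inl ⟨by nlinarith, hxy⟩))
  push Not at hyx hxy
  exact Or.inr (Or.inr (Or.inr ⟨hx, by nlinarith, hyx, hxy⟩))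

lemma rfpaProb_nonneg (hα : 1 < α) (hx : 0 ≤ x) (hy : 0 ≤ y) : 0 ≤ rfpaProb α x y := by
  rcases rfpa_bid_cases hα hx hy with ⟨rfl, rfl⟩ | ⟨hx, h⟩ | ⟨hy, h⟩ | ⟨hx, hy, hxy, hyx⟩
  · simp [rfpaProb]
  · rw [rfpaProb_eq_one hx h]; norm_num
  · rw [rfpaProb_eq_zero hα hx hy h]
  · rw [rfpaProb_of_lt_mul hx hxy hyx]
    linarith [(logb_div_mem_Ioo hα hx hy hxy hyx).1]

lemma rfpaProb_add_rfpaProb_swap (hα : 1 < α) (hx : 0 ≤ x) (hy : 0 ≤ y)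
    (hxy : ¬(x = 0 ∧ y = 0)) : rfpaProb α x y + rfpaProb α y x = 1 := by
  rcases rfpa_bid_cases hα hx hy with h0 | ⟨hx, h⟩ | ⟨hy, h⟩ | ⟨hx, hy, hxy, hyx⟩
  · exact absurd h0 hxy
  · rw [rfpaProb_eq_one hx h, rfpaProb_eq_zero hα hy hx h]; norm_num
  · rw [rfpaProb_eq_zero hα hx hy h, rfpaProb_eq_one hy h]; norm_num
  · have hlogb : Real.logb α (y / x) = -Real.logb α (x / y) := by rw [← Real.logb_inv, inv_div]
    rw [rfpaProb_of_lt_mul hx hxy hyx, rfpaProb_of_lt_mul hy hyx hxy, hlogb]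
    ring

variable {c w : ℝ}

lemma rfpaProb_rpow_mul (hα : 1 < α) (hc : 0 < c) (hw0 : 0 ≤ w) (hw1 : w ≤ 1) :
    rfpaProb α (α ^ (2 * w - 1) * c) c = w := by
  rcases hw1.eq_or_lt with rfl | hw1
  · exact rfpaProb_eq_one (by positivity) (by norm_num)
  rcases hw0.eq_or_lt with rfl | hw0
  · refine rfpaProb_eq_zero hα (by positivity) hc (le_of_eq ?_)
    rw [show (2 : ℝ) * 0 - 1 = -1 by norm_num, Real.rpow_neg_one]
    field_simp
  have hlt : α ^ (2 * w - 1) < α := by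
    simpa using Real.rpow_lt_rpow_of_exponent_lt hα (show 2 * w - 1 < 1 by linarith)
  have hgt : α⁻¹ < α ^ (2 * w - 1) := by
    rw [← Real.rpow_neg_one]
    exact Real.rpow_lt_rpow_of_exponent_lt hα (by linarith)
  have hα0 : 0 < α := by linarith
  rw [rfpaProb_of_lt_mul (by positivity) (by nlinarith) ?_, mul_div_cancel_right₀ _ hc.ne',
    Real.logb_rpow hα0 hα.ne']
  · ring
  · rw [inv_lt_iff_one_lt_mul₀ hα0] at hgt
    nlinarith

lemma exists_eq_rpow_mul (hα : 1 < α) (hx : 0 < x) (hy : 0 < y) (hxy : x < α * y)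
    (hyx : y < α * x) : ∃ w ∈ Set.Icc (0 : ℝ) 1, x = α ^ (2 * w - 1) * y := by
  obtain ⟨h1, h2⟩ := logb_div_mem_Ioo hα hx hy hxy hyx
  refine ⟨(1 + Real.logb α (x / y)) / 2, ⟨by linarith, by linarith⟩, ?_⟩
  rw [show 2 * ((1 + Real.logb α (x / y)) / 2) - 1 = Real.logb α (x / y) by ring,
    Real.rpow_logb (by linarith) hα.ne' (by positivity)]
  field_simp

end Prob

lemma rpow_two_mul_sub_one_le {α σ : ℝ} (hα : 0 < α) (h0 : 0 ≤ σ) (h1 : σ ≤ 1) :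
    α ^ (2 * σ - 1) ≤ (1 - σ) / α + σ * α := by
  have bernoulli := rpow_one_add_le_one_add_mul_self (s := α ^ 2 - 1) (by nlinarith) h0 h1
  have hsq : (α ^ 2) ^ σ = α ^ (2 * σ) := by rw [Real.rpow_mul hα.le, Real.rpow_two]
  rw [add_sub_cancel, hsq] at bernoulli
  rw [Real.rpow_sub hα, Real.rpow_one, div_le_iff₀ hα]
  calc α ^ (2 * σ) ≤ 1 + σ * (α ^ 2 - 1) := bernoulli
    _ = ((1 - σ) / α + σ * α) * α := by field_simp; ring

-- The bound `x ≤ 1.07 · (expected payment)` for the interior bid pair `(1.4^(2w-1) y, y)`.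
lemma rpow_le_mul_mul_rpow_add_one_sub {w : ℝ} (h0 : 0 ≤ w) (h1 : w ≤ 1) :
    (1.4 : ℝ) ^ (2 * w - 1) ≤ 1.07 * (w * 1.4 ^ (2 * w - 1) + (1 - w)) := by
  have hchord := rpow_two_mul_sub_one_le (α := 1.4) (by norm_num) h0 h1
  have hpos : (0 : ℝ) < 1.4 ^ (2 * w - 1) := by positivity
  generalize (1.4 : ℝ) ^ (2 * w - 1) = a at *
  rcases le_or_gt (1.07 * w) 1 with hw | hw
  · norm_num at *
    nlinarith [mul_le_mul_of_nonneg_right hchord (sub_nonneg.2 hw), sq_nonneg (w - 2 / 3)]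
  · nlinarith

lemma mul_rpow_mul_one_sub_le {σ : ℝ} (h0 : 0 ≤ σ) (h1 : σ ≤ 1) :
    1.07 * (1.4 : ℝ) ^ (2 * σ - 1) * (1 - σ) ≤ 0.8 := by
  have hchord := rpow_two_mul_sub_one_le (α := 1.4) (by norm_num) h0 h1
  generalize (1.4 : ℝ) ^ (2 * σ - 1) = a at *
  norm_num at *
  nlinarith [mul_le_mul_of_nonneg_right hchord (sub_nonneg.2 h1), mul_nonneg h0 h0]

/-- Against `c > 0` this bid wins with probability exactly `w` (`rfpaProb_rpow_mul`); a zero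
opposing bid is beaten by any positive bid, hence the `ε`. -/
def deviationBid (α ε w c : ℝ) : ℝ :=
  if c = 0 then (if w = 0 then 0 else ε) else α ^ (2 * w - 1) * c

section Deviation

variable {α ε w c : ℝ}

lemma deviationBid_nonneg (hα : 0 < α) (hε : 0 ≤ ε) (hc : 0 ≤ c) :
    0 ≤ deviationBid α ε w c := by
  unfold deviationBid
  split_ifs <;> positivity

lemma deviationBid_spec (hα : 1 < α) (hε : 0 < ε) (hc : 0 ≤ c) (hw0 : 0 ≤ w) (hw1 : w ≤ 1) :
    w ≤ rfpaProb α (deviationBid α ε w c) c ∧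
      rfpaProb α (deviationBid α ε w c) c * deviationBid α ε w c ≤ w * α ^ (2 * w - 1) * c + ε := by
  unfold deviationBid
  split_ifs with hc0 hw
  · simp [rfpaProb, hw, hc0, hε.le]
  · rw [hc0, rfpaProb_eq_one hε (by simp [hε.le])]
    simp [hw1]
  · have hc : 0 < c := lt_of_le_of_ne hc (Ne.symm hc0)
    rw [rfpaProb_rpow_mul hα hc hw0 hw1]
    constructor <;> linarith

end Deviation

section Equilibrium

variable {q : ℕ} {α : ℝ} {B : Fin 2 → ℝ} {v b : Fin 2 → Fin q → ℝ}

lemma rfpaPi_update_self (b' : Fin q → ℝ) (i : Fin 2) (j : Fin q) :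
    rfpaPi α (Function.update b i b') i j = rfpaProb α (b' j) (b (i + 1) j) := by
  have hi : i + 1 ≠ i := by fin_cases i <;> decide
  rw [rfpaPi, Function.update_self, Function.update_of_ne hi]

theorem IsRfpaEq.sum_le_rfpaV_or_min_le (hα : 1 < α) (hv : ∀ i j, 0 ≤ v i j)
    (hb : IsRfpaEq α B v b) (i : Fin 2) {w : Fin q → ℝ} (hw0 : ∀ j, 0 ≤ w j)
    (hw1 : ∀ j, w j ≤ 1) :
    ∑ j, w j * v i j ≤ rfpaV α v b i ∨
      min (B i) (∑ j, w j * v i j) ≤ ∑ j, w j * α ^ (2 * w j - 1) * b (i + 1) j := by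
  refine or_iff_not_imp_left.2 fun hW => le_of_forall_pos_le_add fun ε hε => ?_
  set δ := ε / (q + 1)
  have hδ : 0 < δ := by positivity
  set b' : Fin q → ℝ := fun j => deviationBid α δ (w j) (b (i + 1) j)
  have hspec j := deviationBid_spec hα hδ (hb.1 (i + 1) j) (hw0 j) (hw1 j)
  have hV : ∑ j, w j * v i j ≤ rfpaV α v (Function.update b i b') i :=
    sum_le_sum fun j _ => by
      rw [rfpaPi_update_self]
      exact mul_le_mul_of_nonneg_right (hspec j).1 (hv i j)
  have hS : rfpaSpendI α (Function.update b i b') i ≤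
      ∑ j, w j * α ^ (2 * w j - 1) * b (i + 1) j + q * δ := by
    calc rfpaSpendI α (Function.update b i b') i
        ≤ ∑ j, (w j * α ^ (2 * w j - 1) * b (i + 1) j + δ) :=
          sum_le_sum fun j _ => by
            rw [rfpaPi_update_self, Function.update_self]
            exact (hspec j).2
      _ = ∑ j, w j * α ^ (2 * w j - 1) * b (i + 1) j + q * δ := by
          simp [sum_add_distrib]
  have hqδ : q * δ ≤ ε := by
    rw [mul_div_assoc']
    exact div_le_of_le_mul₀ (by positivity) hε.le (by nlinarith)
  rcases hb.2.2 i b' fun j => deviationBid_nonneg (by linarith) hδ.le (hb.1 (i + 1) j)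
    with h | h
  · exact absurd (hV.trans h) hW
  · calc min (B i) (∑ j, w j * v i j)
        ≤ min (B i) (rfpaV α v (Function.update b i b') i) := min_le_min_left _ hV
      _ ≤ rfpaSpendI α (Function.update b i b') i := h.le
      _ ≤ _ := by linarith

lemma rfpaV_nonneg (hα : 1 < α) (hv : ∀ i j, 0 ≤ v i j) (hb : ∀ i j, 0 ≤ b i j) (i : Fin 2) :
    0 ≤ rfpaV α v b i :=
  sum_nonneg fun j _ => mul_nonneg (rfpaProb_nonneg hα (hb _ j) (hb _ j)) (hv i j)

lemma rfpaLW_nonneg (hα : 1 < α) (hB : ∀ i, 0 ≤ B i) (hv : ∀ i j, 0 ≤ v i j)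
    (hb : ∀ i j, 0 ≤ b i j) : 0 ≤ rfpaLW α B v b :=
  sum_nonneg fun i _ => le_min (hB i) (rfpaV_nonneg hα hv hb i)

lemma IsRfpaEq.sum_rfpaSpendI_le (hb : IsRfpaEq α B v b) :
    ∑ i, rfpaSpendI α b i ≤ rfpaLW α B v b :=
  sum_le_sum fun i _ => hb.2.1 i

variable {π : Fin q → ℝ}

lemma IsRfpaEq.min_le_mul_sum_of_lt (hα : 1 < α) (hv : ∀ i j, 0 ≤ v i j)
    (hb : IsRfpaEq α B v b) (i : Fin 2) (hπ0 : ∀ j, 0 ≤ π j) (hπ1 : ∀ j, π j ≤ 1)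
    (hVO : rfpaV α v b i < ∑ j, π j * v i j) :
    min (B i) (∑ j, π j * v i j) ≤ α * ∑ j, π j * b (i + 1) j := by
  rcases hb.sum_le_rfpaV_or_min_le hα hv i hπ0 hπ1 with h | h
  · exact absurd h (not_le.2 hVO)
  refine h.trans ?_
  rw [mul_sum]
  refine sum_le_sum fun j _ => ?_
  have hpow : α ^ (2 * π j - 1) ≤ α := by
    simpa using Real.rpow_le_rpow_of_exponent_le hα.le (show 2 * π j - 1 ≤ 1 by linarith [hπ1 j])
  calc π j * α ^ (2 * π j - 1) * b (i + 1) j ≤ π j * α * b (i + 1) j :=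
        mul_le_mul_of_nonneg_right (mul_le_mul_of_nonneg_left hpow (hπ0 j)) (hb.1 _ j)
    _ = α * (π j * b (i + 1) j) := by ring

lemma IsRfpaEq.le_rpow_mul_of_lt_mul (hα : 1 < α) (hv : ∀ i j, 0 ≤ v i j)
    (hb : IsRfpaEq α B v b) (i : Fin 2) (hπ0 : ∀ j, 0 ≤ π j) (hπ1 : ∀ j, π j ≤ 1) {μ : ℝ}
    (hμ0 : 0 < μ) (hμ1 : μ ≤ 1) (hVμ : rfpaV α v b i < μ * ∑ j, π j * v i j)
    (hμB : μ * ∑ j, π j * v i j ≤ B i) :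
    ∑ j, π j * v i j ≤ α ^ (2 * μ - 1) * ∑ j, π j * b (i + 1) j := by
  have hw0 j : 0 ≤ μ * π j := mul_nonneg hμ0.le (hπ0 j)
  have hw1 j : μ * π j ≤ 1 := by nlinarith [hπ0 j, hπ1 j]
  have hsum : ∑ j, μ * π j * v i j = μ * ∑ j, π j * v i j := by
    simp only [mul_sum, mul_assoc]
  rcases hb.sum_le_rfpaV_or_min_le hα hv i hw0 hw1 with h | h
  · rw [hsum] at h
    linarith
  rw [hsum, min_eq_right hμB] at h
  have hcost : ∑ j, μ * π j * α ^ (2 * (μ * π j) - 1) * b (i + 1) j ≤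
      μ * (α ^ (2 * μ - 1) * ∑ j, π j * b (i + 1) j) := by
    simp only [mul_sum]
    refine sum_le_sum fun j _ => ?_
    have hpow : α ^ (2 * (μ * π j) - 1) ≤ α ^ (2 * μ - 1) :=
      Real.rpow_le_rpow_of_exponent_le hα.le (by nlinarith [hπ1 j])
    calc μ * π j * α ^ (2 * (μ * π j) - 1) * b (i + 1) j
        ≤ μ * π j * α ^ (2 * μ - 1) * b (i + 1) j :=
          mul_le_mul_of_nonneg_right (mul_le_mul_of_nonneg_left hpow (hw0 j)) (hb.1 _ j)
      _ = μ * (α ^ (2 * μ - 1) * (π j * b (i + 1) j)) := by ring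
  exact le_of_mul_le_mul_left (h.trans hcost) hμ0

/-- The limit `μ → σ⁺` of `le_rpow_mul_of_lt_mul`, with `σ = V / O`. -/
lemma IsRfpaEq.le_rpow_mul_of_lt (hα : 1 < α) (hv : ∀ i j, 0 ≤ v i j)
    (hb : IsRfpaEq α B v b) (i : Fin 2) (hπ0 : ∀ j, 0 ≤ π j) (hπ1 : ∀ j, π j ≤ 1)
    (hVO : rfpaV α v b i < ∑ j, π j * v i j) (hVB : rfpaV α v b i < B i) :
    ∑ j, π j * v i j ≤
      α ^ (2 * (rfpaV α v b i / ∑ j, π j * v i j) - 1) * ∑ j, π j * b (i + 1) j := by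
  set O := ∑ j, π j * v i j
  set V := rfpaV α v b i
  have hV0 : 0 ≤ V := rfpaV_nonneg hα hv hb.1 i
  have hO : 0 < O := by linarith
  have hσ : V / O < min 1 (B i / O) :=
    lt_min ((div_lt_one hO).2 hVO) (div_lt_div_of_pos_right hVB hO)
  have hcont : Continuous fun μ : ℝ => α ^ (2 * μ - 1) * ∑ j, π j * b (i + 1) j := by
    fun_prop (disch := linarith)
  refine ge_of_tendsto (x := 𝓝[>] (V / O))
    (hcont.continuousAt.tendsto.mono_left nhdsWithin_le_nhds) ?_
  filter_upwards [Ioo_mem_nhdsGT hσ] with μ ⟨hσμ, hμ⟩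
  refine hb.le_rpow_mul_of_lt_mul hα hv i hπ0 hπ1 ((div_nonneg hV0 hO.le).trans_lt hσμ)
    (hμ.le.trans (min_le_left _ _)) ((div_lt_iff₀ hO).1 hσμ) ?_
  exact ((lt_div_iff₀ hO).1 (hμ.trans_le (min_le_right _ _))).le

end Equilibrium

def rfpaSpendQ {q : ℕ} (α : ℝ) (b : Fin 2 → Fin q → ℝ) (j : Fin q) : ℝ :=
  ∑ i, rfpaPi α b i j * b i j

section Spend

variable {q : ℕ} {α : ℝ} {B : Fin 2 → ℝ} {v b π : Fin 2 → Fin q → ℝ}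

lemma le_mul_rfpaProb_mul_add {x y : ℝ} (hx : 0 ≤ x) (hy : 0 ≤ y) :
    x ≤ 1.07 * (rfpaProb 1.4 x y * x + rfpaProb 1.4 y x * y) := by
  have hα : (1 : ℝ) < 1.4 := by norm_num
  by_cases h00 : x = 0 ∧ y = 0
  · simp [h00.1, h00.2]
  have hsum := rfpaProb_add_rfpaProb_swap hα hx hy h00
  have hp := rfpaProb_nonneg hα hx hy
  have hp' := rfpaProb_nonneg hα hy hx
  rcases le_or_gt x y with hxy | hyx
  · nlinarith
  rcases le_or_gt (1.4 * y) x with hfar | hnear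
  · rw [rfpaProb_eq_one (hy.trans_lt hyx) hfar]
    nlinarith
  have hy0 : 0 < y := by linarith
  obtain ⟨w, ⟨hw0, hw1⟩, rfl⟩ := exists_eq_rpow_mul hα (by linarith) hy0 hnear (by linarith)
  have hw : rfpaProb 1.4 (1.4 ^ (2 * w - 1) * y) y = w := rfpaProb_rpow_mul hα hy0 hw0 hw1
  rw [hw] at hsum ⊢
  rw [show rfpaProb 1.4 y (1.4 ^ (2 * w - 1) * y) = 1 - w by linarith]
  nlinarith [mul_le_mul_of_nonneg_right (rpow_le_mul_mul_rpow_add_one_sub hw0 hw1) hy]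

lemma sum_rfpaSpendQ : ∑ j, rfpaSpendQ α b j = ∑ i, rfpaSpendI α b i :=
  sum_comm

lemma le_mul_rfpaSpendQ (hb : ∀ i j, 0 ≤ b i j) (i : Fin 2) (j : Fin q) :
    b i j ≤ 1.07 * rfpaSpendQ 1.4 b j := by
  have h := le_mul_rfpaProb_mul_add (hb i j) (hb (i + 1) j)
  fin_cases i <;> simp [rfpaSpendQ, Fin.sum_univ_two, rfpaPi] at h ⊢ <;> linarith

lemma IsRfpaEq.sum_sum_mul_bid_le (hb : IsRfpaEq 1.4 B v b) (hπ : IsAlloc π) :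
    ∑ i, ∑ j, π i j * b (i + 1) j ≤ 1.07 * rfpaLW 1.4 B v b := by
  obtain ⟨hπ0, -, hπ1⟩ := hπ
  have hquery j : ∑ i, π i j * b (i + 1) j ≤ 1.07 * rfpaSpendQ 1.4 b j := by
    have hspend : 0 ≤ 1.07 * rfpaSpendQ 1.4 b j := (hb.1 0 j).trans (le_mul_rfpaSpendQ hb.1 0 j)
    calc ∑ i, π i j * b (i + 1) j ≤ ∑ i, π i j * (1.07 * rfpaSpendQ 1.4 b j) :=
          sum_le_sum fun i _ =>
            mul_le_mul_of_nonneg_left (le_mul_rfpaSpendQ hb.1 _ j) (hπ0 i j)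
      _ = (∑ i, π i j) * (1.07 * rfpaSpendQ 1.4 b j) := (sum_mul ..).symm
      _ ≤ 1.07 * rfpaSpendQ 1.4 b j := mul_le_of_le_one_left hspend (hπ1 j)
  calc ∑ i, ∑ j, π i j * b (i + 1) j = ∑ j, ∑ i, π i j * b (i + 1) j := sum_comm
    _ ≤ ∑ j, 1.07 * rfpaSpendQ 1.4 b j := sum_le_sum fun j _ => hquery j
    _ = 1.07 * ∑ i, rfpaSpendI 1.4 b i := by rw [← mul_sum, sum_rfpaSpendQ]
    _ ≤ 1.07 * rfpaLW 1.4 B v b := by gcongr; exact hb.sum_rfpaSpendI_le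

lemma IsRfpaEq.min_le_add_of_lt (hB : ∀ i, 0 ≤ B i) (hv : ∀ i j, 0 ≤ v i j)
    (hb : IsRfpaEq 1.4 B v b) (hπ : IsAlloc π) (i : Fin 2)
    (hVO : rfpaV 1.4 v b i < ∑ j, π i j * v i j) :
    min (B i) (∑ j, π i j * v i j) ≤ min (B i) (rfpaV 1.4 v b i) + 0.8 * rfpaLW 1.4 B v b := by
  have hα : (1 : ℝ) < 1.4 := by norm_num
  have hLW := rfpaLW_nonneg hα hB hv hb.1
  rcases le_or_gt (B i) (rfpaV 1.4 v b i) with hBV | hVB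
  · rw [min_eq_left hBV]
    linarith [min_le_left (B i) (∑ j, π i j * v i j)]
  have hO := hb.le_rpow_mul_of_lt hα hv i (hπ.1 i) (hπ.2.1 i) hVO hVB
  have hT : ∑ j, π i j * b (i + 1) j ≤ 1.07 * rfpaLW 1.4 B v b :=
    (single_le_sum (f := fun k => ∑ j, π k j * b (k + 1) j)
      (fun k _ => sum_nonneg fun j _ => mul_nonneg (hπ.1 k j) (hb.1 _ j))
      (mem_univ i)).trans (hb.sum_sum_mul_bid_le hπ)
  set O := ∑ j, π i j * v i j
  set V := rfpaV 1.4 v b i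
  set σ := V / O
  have hOpos : 0 < O := (rfpaV_nonneg hα hv hb.1 i).trans_lt hVO
  have hσ0 : 0 ≤ σ := div_nonneg (rfpaV_nonneg hα hv hb.1 i) hOpos.le
  have hσ1 : σ ≤ 1 := (div_le_one hOpos).2 hVO.le
  have hgap : O - V ≤ 0.8 * rfpaLW 1.4 B v b :=
    calc O - V = (1 - σ) * O := by simp only [σ]; field_simp
      _ ≤ (1 - σ) * ((1.4 : ℝ) ^ (2 * σ - 1) * (1.07 * rfpaLW 1.4 B v b)) := by
          refine mul_le_mul_of_nonneg_left (hO.trans ?_) (by linarith)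
          exact mul_le_mul_of_nonneg_left hT (by positivity)
      _ = (1.07 * (1.4 : ℝ) ^ (2 * σ - 1) * (1 - σ)) * rfpaLW 1.4 B v b := by ring
      _ ≤ 0.8 * rfpaLW 1.4 B v b :=
          mul_le_mul_of_nonneg_right (mul_rpow_mul_one_sub_le hσ0 hσ1) hLW
  rw [min_eq_right hVB.le]
  linarith [min_le_right (B i) O]

end Spend

/-- for two bidders with ROS and budget constraints, in rFPA(1.4) every
undominated bid profile satisfies `1.8 * LW ≥ OPT`. -/
theorem stmt15 (q : ℕ) (B : Fin 2 → ℝ) (v b : Fin 2 → Fin q → ℝ)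
    (hB : ∀ i, 0 < B i) (hv : ∀ i j, 0 ≤ v i j)
    (hb : IsRfpaEq 1.4 B v b)
    (OPT : ℝ)
    (hOPT : IsGreatest {w : ℝ | ∃ π : Fin 2 → Fin q → ℝ, IsAlloc π ∧ w = allocLW B v π} OPT) :
    OPT ≤ 1.8 * rfpaLW 1.4 B v b := by
  obtain ⟨π, hπ, rfl⟩ := hOPT.1
  have hα : (1 : ℝ) < 1.4 := by norm_num
  have hB0 i := (hB i).le
  have hLW := rfpaLW_nonneg hα hB0 hv hb.1
  have hcross := hb.sum_sum_mul_bid_le hπ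
  have hle i (h : ∑ j, π i j * v i j ≤ rfpaV 1.4 v b i) :
      min (B i) (∑ j, π i j * v i j) ≤ min (B i) (rfpaV 1.4 v b i) := min_le_min_left _ h
  have hone i := hb.min_le_add_of_lt hB0 hv hπ i
  have htwo i := hb.min_le_mul_sum_of_lt hα hv i (hπ.1 i) (hπ.2.1 i)
  have hLW2 : rfpaLW 1.4 B v b = min (B 0) (rfpaV 1.4 v b 0) + min (B 1) (rfpaV 1.4 v b 1) :=
    Fin.sum_univ_two _
  rw [Fin.sum_univ_two] at hcross
  rw [allocLW, Fin.sum_univ_two]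
  rcases le_or_gt (∑ j, π 0 j * v 0 j) (rfpaV 1.4 v b 0) with h0 | h0 <;>
    rcases le_or_gt (∑ j, π 1 j * v 1 j) (rfpaV 1.4 v b 1) with h1 | h1
  · linarith [hle 0 h0, hle 1 h1]
  · linarith [hle 0 h0, hone 1 h1]
  · linarith [hone 0 h0, hle 1 h1]
  · linarith [htwo 0 h0, htwo 1 h1]
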